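/- arXiv:1402.6096 — 2 statements merged into one kernel-verified Lean document; each statement's English description precedes it below -/
import Mathlib

section
/- In the gadget orientation for a triangle abc with ∠b ≤ ∠c ≤ ∠a, where the segment bc is horizontal with b left of c, a above the line through bc, and the wedges of angle 2π/3 at a, b, c have bisector orientations 240°, 0°, 120° respectively, the edges (a,b) and (b,c) are present in the induced graph; i.e., a ∈ W_b, b ∈ W_a, c ∈ W_b, and b ∈ W_c. -/
open Real

noncomputable section

abbrev Pl := EuclideanSpace ℝ (Fin 2)

def pt (x y : ℝ) : Pl := (EuclideanSpace.equiv (Fin 2) ℝ).symm ![x, y]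

def dir (θ : ℝ) : Pl := pt (Real.cos θ) (Real.sin θ)

/-- Wedge with apex `p`, bisector orientation `θ`, angular width `α`. -/
def wedge (p : Pl) (θ α : ℝ) : Set Pl :=
  {q | q = p ∨ InnerProductGeometry.angle (q - p) (dir θ) ≤ α / 2}

end

open EuclideanGeometry

/-!
A wedge of angle `2π/3` at `p` with bisector `θ` is cut out by `‖q - p‖ ≤ 2 ⟪q - p, dir θ⟫`.
As `c - b` is a positive multiple of `dir 0`, the memberships of `c` and `b` reduce to
`cos (0 - 0) ≥ 1/2` and `cos (π - 2π/3) ≥ 1/2`, while `a ∈ W_b` says exactly `∠ a b c ≤ π/3`,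
true because `∠b` is the smallest angle of the triangle. Writing `a - b = (x, y)`, this gives
`‖a - b‖ ≤ 2x`, and with `y ≥ 0` it yields `‖a - b‖ ≤ x + √3 y`, which is `b ∈ W_a`.
-/

open InnerProductGeometry

theorem InnerProductGeometry.angle_le_pi_div_three_iff {E : Type*} [NormedAddCommGroup E]
    [InnerProductSpace ℝ E] {v d : E} (hv : v ≠ 0) (hd : d ≠ 0) :
    angle v d ≤ π / 3 ↔ ‖v‖ * ‖d‖ ≤ 2 * inner ℝ v d := by
  have hpos : 0 < ‖v‖ * ‖d‖ := by positivity
  rw [← strictAntiOn_cos.le_iff_ge ⟨by positivity, by linarith [pi_pos]⟩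
    ⟨angle_nonneg v d, angle_le_pi v d⟩, cos_pi_div_three, cos_angle, le_div_iff₀ hpos]
  constructor <;> intro h <;> linarith

@[simp] theorem dir_apply_zero (θ : ℝ) : dir θ 0 = cos θ := rfl
@[simp] theorem dir_apply_one (θ : ℝ) : dir θ 1 = sin θ := rfl

theorem inner_dir (v : Pl) (θ : ℝ) : inner ℝ v (dir θ) = v 0 * cos θ + v 1 * sin θ := by
  simp [PiLp.inner_apply, Fin.sum_univ_two, mul_comm]

theorem norm_sq_eq_fin_two (v : Pl) : ‖v‖ ^ 2 = v 0 ^ 2 + v 1 ^ 2 := by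
  simp [EuclideanSpace.norm_sq_eq, Fin.sum_univ_two]

theorem norm_dir (θ : ℝ) : ‖dir θ‖ = 1 := by
  simp [EuclideanSpace.norm_eq, Fin.sum_univ_two]

theorem mem_wedge_two_pi_div_three_iff {p q : Pl} {θ : ℝ} :
    q ∈ wedge p θ (2 * π / 3) ↔ ‖q - p‖ ≤ 2 * inner ℝ (q - p) (dir θ) := by
  have hdir : dir θ ≠ 0 := norm_ne_zero_iff.1 (by simp [norm_dir])
  rw [wedge, Set.mem_ofPred_eq, show 2 * π / 3 / 2 = π / 3 by ring]
  rcases eq_or_ne q p with rfl | hqp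
  · simp
  rw [angle_le_pi_div_three_iff (sub_ne_zero.2 hqp) hdir, norm_dir, mul_one]
  simp [hqp]

theorem dir_add_pi (θ : ℝ) : dir (θ + π) = -dir θ := by
  ext i; fin_cases i <;> simp [cos_add_pi, sin_add_pi]

theorem inner_dir_dir (α β : ℝ) : inner ℝ (dir α) (dir β) = cos (α - β) := by
  rw [inner_dir, dir_apply_zero, dir_apply_one, cos_sub]

theorem add_smul_dir_mem_wedge {p : Pl} {r α θ : ℝ} (hr : 0 ≤ r) (h : 1 / 2 ≤ cos (α - θ)) :
    p + r • dir α ∈ wedge p θ (2 * π / 3) := by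
  rw [mem_wedge_two_pi_div_three_iff, add_sub_cancel_left, norm_smul, norm_dir,
    inner_smul_left, inner_dir_dir, Real.norm_of_nonneg hr]
  simp only [conj_trivial]
  nlinarith

theorem sub_eq_smul_dir_zero {b c : Pl} (h : b 1 = c 1) : c - b = (c 0 - b 0) • dir 0 := by
  ext i; fin_cases i <;> simp [h]

theorem mem_wedge_four_pi_div_three_of_mem_wedge_zero {a b : Pl} (ha : a ∈ wedge b 0 (2 * π / 3))
    (habove : b 1 ≤ a 1) : b ∈ wedge a (4 * π / 3) (2 * π / 3) := by
  rw [mem_wedge_two_pi_div_three_iff, inner_dir, cos_zero, sin_zero] at ha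
  rw [mem_wedge_two_pi_div_three_iff, show 4 * π / 3 = π / 3 + π by ring, dir_add_pi, ← neg_sub,
    norm_neg, inner_neg_neg, inner_dir, cos_pi_div_three, sin_pi_div_three]
  set v := a - b
  have hv1 : 0 ≤ v 1 := by simp [v]; linarith
  have hv0 : 0 ≤ v 0 := by linarith [norm_nonneg v]
  have h3 : √3 ^ 2 = 3 := sq_sqrt (by norm_num)
  -- `(x + √3 y)² - (x² + y²) = 2y (√3 x + y) ≥ 0` for `v = (x, y)`
  have hsq : ‖v‖ ^ 2 ≤ (v 0 + √3 * v 1) ^ 2 := by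
    rw [norm_sq_eq_fin_two]
    nlinarith [mul_nonneg (mul_nonneg (sqrt_nonneg 3) hv0) hv1]
  have := abs_le_of_sq_le_sq' hsq (by positivity)
  linarith

theorem stmt3_general (a b c : Pl)
    (h1 : ∠ a b c ≤ ∠ b c a) (h2 : ∠ b c a ≤ ∠ c a b)
    (hhoriz : b 1 = c 1) (hleft : b 0 < c 0) (habove : b 1 ≤ a 1) :
    a ∈ wedge b 0 (2 * π / 3) ∧ b ∈ wedge a (4 * π / 3) (2 * π / 3) ∧
    c ∈ wedge b 0 (2 * π / 3) ∧ b ∈ wedge c (2 * π / 3) (2 * π / 3) := by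
  have hs : 0 < c 0 - b 0 := sub_pos.2 hleft
  have hcb := sub_eq_smul_dir_zero hhoriz
  have hc : c ∈ wedge b 0 (2 * π / 3) := by
    rw [← add_sub_cancel b c, hcb]
    exact add_smul_dir_mem_wedge hs.le (by norm_num)
  have hb : b ∈ wedge c (2 * π / 3) (2 * π / 3) := by
    rw [← add_sub_cancel c b, ← neg_sub, hcb, ← smul_neg, ← dir_add_pi]
    exact add_smul_dir_mem_wedge hs.le
      (by rw [show 0 + π - 2 * π / 3 = π / 3 by ring, cos_pi_div_three])
  have ha : a ∈ wedge b 0 (2 * π / 3) := by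
    refine Or.inr ?_
    rw [show 2 * π / 3 / 2 = π / 3 by ring]
    have := angle_le_pi_div_three_of_le_of_le h1 (h1.trans h2)
      (Or.inr (Or.inr fun h ↦ hleft.ne (congrArg (· 0) h)))
    rwa [EuclideanGeometry.angle, vsub_eq_sub, vsub_eq_sub, hcb,
      angle_smul_right_of_pos _ _ hs] at this
  exact ⟨ha, mem_wedge_four_pi_div_three_of_mem_wedge_zero ha habove, hc, hb⟩

/-- In the gadget orientation for a triangle `abc` with `∠b ≤ ∠c ≤ ∠a`, with `bc`
horizontal (`b` left of `c`) and `a` on or above the line `bc`, assigning to the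
wedges of angle 2π/3 at `a`, `b`, `c` the bisector orientations 240°, 0°, 120°
(i.e. 4π/3, 0 and 2π/3 radians), the edges `(a,b)` and `(b,c)` are present in
the induced graph. -/
theorem stmt3 (a b c : Pl) (hind : AffineIndependent ℝ ![a, b, c])
    (h1 : ∠ a b c ≤ ∠ b c a) (h2 : ∠ b c a ≤ ∠ c a b)
    (hhoriz : b 1 = c 1) (hleft : b 0 < c 0) (habove : b 1 ≤ a 1) :
    a ∈ wedge b 0 (2 * π / 3) ∧ b ∈ wedge a (4 * π / 3) (2 * π / 3) ∧
    c ∈ wedge b 0 (2 * π / 3) ∧ b ∈ wedge c (2 * π / 3) (2 * π / 3) :=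
  stmt3_general a b c h1 h2 hhoriz hleft habove
end

section
/- For every n ≥ 2, there exists a set P of n points in the plane such that for every spanning tree T of P whose angular span at every vertex is at most 2π/3 (more generally, less than π), wt(T) ≥ 2·wt(MST(P)) − O(diam(P)/n)·wt(MST(P)); concretely, for n collinear equally spaced points, any spanning tree with all angular spans strictly less than π has weight at least 2(n−1) − 1 times the spacing, while the MST has weight (n−1) times the spacing. -/
open Real

open scoped Classical in
/-- Total Euclidean edge weight of a geometric graph. -/
noncomputable def wt {V : Type*} [Fintype V] (G : SimpleGraph V) (pos : V → Pl) : ℝ :=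
  (∑ p : V, ∑ q : V, if G.Adj p q then dist (pos p) (pos q) else 0) / 2

/-! The edge between the points `i < j` has length `j - i = 1 + #{v | i < v < j}`, so the
weight of a spanning tree is `(n - 1) + ∑ v, #{edges straddling v}`. An angular span below `π`
puts all neighbours of a point on one side of it; a tree path from an interior point `v` to the
endpoint on the other side must therefore cross `v` along an edge straddling it.
Hence each of the `n - 2` interior points is straddled, and the weight is at least `2n - 3`. -/

open Finset

lemma pt_sub_pt (a b : ℝ) : pt a 0 - pt b 0 = (a - b) • pt 1 0 := by
  ext i
  fin_cases i <;> simp [pt, EuclideanSpace.equiv]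

lemma dist_pt_pt (a b : ℝ) : dist (pt a 0) (pt b 0) = |a - b| := by
  simp [EuclideanSpace.dist_eq, Fin.sum_univ_two, pt, Real.dist_eq, Real.sqrt_sq_eq_abs]

lemma pt_one_zero_ne_zero : pt 1 0 ≠ 0 := by
  intro h
  simpa [pt, EuclideanSpace.equiv] using congrArg (· 0) h

lemma add_smul_notMem_wedge_of_neg_of_pos {p u : Pl} (hu : u ≠ 0) {θ α c d : ℝ} (hα : α < π)
    (hc : c < 0) (hd : 0 < d) (hq : p + c • u ∈ wedge p θ α) : p + d • u ∉ wedge p θ α := by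
  simp only [wedge, Set.mem_ofPred_eq, add_eq_left, smul_eq_zero, hc.ne, hd.ne', hu, or_self,
    false_or, add_sub_cancel_left, not_le] at hq ⊢
  rw [InnerProductGeometry.angle_smul_left_of_neg _ _ hc,
    InnerProductGeometry.angle_neg_left] at hq
  rw [InnerProductGeometry.angle_smul_left_of_pos _ _ hd]
  linarith

lemma pt_notMem_wedge_of_lt_of_lt {θ α a b c : ℝ} (hα : α < π) (hb : b < a) (hc : a < c)
    (hbw : pt b 0 ∈ wedge (pt a 0) θ α) : pt c 0 ∉ wedge (pt a 0) θ α := by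
  rw [← add_sub_cancel (pt a 0) (pt b 0), pt_sub_pt] at hbw
  rw [← add_sub_cancel (pt a 0) (pt c 0), pt_sub_pt]
  exact add_smul_notMem_wedge_of_neg_of_pos pt_one_zero_ne_zero hα (by linarith) (by linarith) hbw

namespace SimpleGraph

variable {V : Type*} {G : SimpleGraph V}

lemma Preconnected.exists_adj_of_mem_of_notMem (hG : G.Preconnected) {S : Set V} {u v : V}
    (hu : u ∈ S) (hv : v ∉ S) : ∃ x ∈ S, ∃ y ∉ S, G.Adj x y := by
  obtain ⟨d, -, hd₁, hd₂⟩ := (hG u v).some.exists_boundary_dart S hu hv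
  exact ⟨d.fst, hd₁, d.snd, hd₂, d.adj⟩

lemma Preconnected.exists_adj_lt_lt [LinearOrder V] (hG : G.Preconnected) {v a b : V}
    (hv : ∀ q r, G.Adj v q → G.Adj v r → q < v → ¬ v < r) (ha : a < v) (hb : v < b) :
    ∃ x y, G.Adj x y ∧ x < v ∧ v < y := by
  -- Edges leaving `[v, ∞)` and `(-∞, v]`; if both started at `v`, it would have neighbours on
  -- both sides.
  obtain ⟨x, hx, y, hy, hxy⟩ := hG.exists_adj_of_mem_of_notMem (S := Set.Ici v) le_rfl ha.not_ge
  obtain ⟨x', hx', y', hy', hxy'⟩ :=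
    hG.exists_adj_of_mem_of_notMem (S := Set.Iic v) le_rfl hb.not_ge
  simp only [Set.mem_Ici, Set.mem_Iic, not_le] at hx hy hx' hy'
  rcases hx.lt_or_eq with hx | rfl
  · exact ⟨y, x, hxy.symm, hy, hx⟩
  rcases hx'.lt_or_eq with hx' | rfl
  · exact ⟨x', y', hxy', hx', hy'⟩
  exact (hv y y' hxy hxy' hy hy').elim

variable [Fintype V] [DecidableRel G.Adj]

lemma two_le_card_darts_min_lt_lt_max [LinearOrder V] {x y v : V} (hxy : G.Adj x y)
    (hx : x < v) (hy : v < y) :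
    2 ≤ #{d : G.Dart | min d.fst d.snd < v ∧ v < max d.fst d.snd} := by
  let d : G.Dart := ⟨(x, y), hxy⟩
  have hd : d ≠ d.symm := by simp [d, Dart.ext_iff, hxy.ne]
  calc 2 = #{d, d.symm} := (card_pair hd).symm
    _ ≤ _ := card_le_card <| by
      intro e he
      simp only [mem_insert, mem_singleton] at he
      rcases he with rfl | rfl <;> simp [d, hx, hy]

end SimpleGraph

lemma sum_darts_dist_eq_two_mul_wt {V : Type*} [Fintype V] (G : SimpleGraph V)
    [DecidableRel G.Adj] (pos : V → Pl) :
    ∑ d : G.Dart, dist (pos d.fst) (pos d.snd) = 2 * wt G pos := by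
  calc ∑ d : G.Dart, dist (pos d.fst) (pos d.snd)
      = ∑ x ∈ univ.filter (fun x : V × V => G.Adj x.1 x.2), dist (pos x.1) (pos x.2) :=
        Finset.sum_bij' (fun d _ => d.toProd) (fun x hx => ⟨x, (mem_filter.1 hx).2⟩)
          (fun d _ => by simp) (by simp) (by simp) (by simp) (by simp)
    _ = 2 * wt G pos := by
      rw [Finset.sum_filter, Fintype.sum_prod_type, wt, mul_div_cancel₀ _ two_ne_zero]
      -- `wt` is defined with the classical decidability instance for `G.Adj`.
      congr!

lemma Fin.abs_sub_eq_card_add_one {n : ℕ} {p q : Fin n} (h : p ≠ q) :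
    |(p : ℝ) - q| = #{v | min p q < v ∧ v < max p q} + 1 := by
  wlog hpq : p < q generalizing p q
  · rw [abs_sub_comm, min_comm, max_comm]
    exact this h.symm (lt_of_le_of_ne (not_lt.1 hpq) h.symm)
  have hIoo : ({v | min p q < v ∧ v < max p q} : Finset (Fin n)) = Ioo p q := by
    ext v
    simp [min_eq_left hpq.le, max_eq_right hpq.le]
  obtain ⟨k, hk⟩ : ∃ k, (q : ℕ) = p + k + 1 := ⟨q - p - 1, by have : (p : ℕ) < q := hpq; omega⟩
  rw [hIoo, Fin.card_Ioo, abs_sub_comm, hk, show (p : ℕ) + k + 1 - p - 1 = k by omega]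
  push_cast
  rw [show (p : ℝ) + k + 1 - p = k + 1 by ring, abs_of_nonneg (by positivity)]

lemma sum_darts_abs_sub_eq {n : ℕ} (G : SimpleGraph (Fin n)) [DecidableRel G.Adj] :
    ∑ d : G.Dart, |(d.fst : ℝ) - d.snd| =
      Fintype.card G.Dart +
        ∑ v, (#{d : G.Dart | min d.fst d.snd < v ∧ v < max d.fst d.snd} : ℝ) := by
  calc ∑ d : G.Dart, |(d.fst : ℝ) - d.snd|
      = ∑ d : G.Dart, ((#{v | min d.fst d.snd < v ∧ v < max d.fst d.snd} : ℝ) + 1) :=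
        sum_congr rfl fun d _ => Fin.abs_sub_eq_card_add_one d.fst_ne_snd
    _ = _ := by
      have := sum_card_bipartiteAbove_eq_sum_card_bipartiteBelow (s := univ) (t := univ)
        (r := fun (d : G.Dart) v => min d.fst d.snd < v ∧ v < max d.fst d.snd)
      simp only [bipartiteAbove, bipartiteBelow] at this
      rw [sum_add_distrib, ← Nat.cast_sum, ← Nat.cast_sum, this]
      simp [add_comm]

lemma card_darts_add_le_sum_abs_sub {m : ℕ} (G : SimpleGraph (Fin (m + 2))) [DecidableRel G.Adj]
    (hG : G.Preconnected) (hside : ∀ v q r, G.Adj v q → G.Adj v r → q < v → ¬ v < r) :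
    Fintype.card G.Dart + 2 * (m : ℝ) ≤ ∑ d : G.Dart, |(d.fst : ℝ) - d.snd| := by
  rw [sum_darts_abs_sub_eq]
  gcongr
  have hinterior : ∀ v ∈ Ioo 0 (Fin.last (m + 1)),
      2 ≤ #{d : G.Dart | min d.fst d.snd < v ∧ v < max d.fst d.snd} := by
    intro v hv
    obtain ⟨x, y, hxy, hx, hy⟩ := hG.exists_adj_lt_lt (hside v) (mem_Ioo.1 hv).1 (mem_Ioo.1 hv).2
    exact SimpleGraph.two_le_card_darts_min_lt_lt_max hxy hx hy
  calc 2 * (m : ℝ) = #(Ioo 0 (Fin.last (m + 1))) • (2 : ℝ) := by simp [Fin.card_Ioo, mul_comm]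
    _ ≤ ∑ v ∈ Ioo 0 (Fin.last (m + 1)),
          (#{d : G.Dart | min d.fst d.snd < v ∧ v < max d.fst d.snd} : ℝ) :=
        card_nsmul_le_sum _ _ _ fun v hv => by exact_mod_cast hinterior v hv
    _ ≤ _ := sum_le_sum_of_subset_of_nonneg (subset_univ _) fun _ _ _ => by positivity

/-- For `n` collinear points spaced at unit distance, every spanning tree whose
angular span at each point is strictly less than π has weight at least `2n − 3`,
while the minimum spanning tree has weight `n − 1`. -/
theorem stmt7 (n : ℕ) (hn : 2 ≤ n) (pts : Fin n → Pl)
    (hpts : ∀ i : Fin n, pts i = pt (i : ℝ) 0)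
    (T : SimpleGraph (Fin n)) (htree : T.IsTree)
    (hspan : ∀ p : Fin n, ∃ θ α : ℝ, α < π ∧
      ∀ q : Fin n, T.Adj p q → pts q ∈ wedge (pts p) θ α) :
    wt T pts ≥ 2 * (n : ℝ) - 3 := by
  classical
  obtain ⟨m, rfl⟩ : ∃ m, n = m + 2 := ⟨n - 2, by omega⟩
  have hside : ∀ v q r, T.Adj v q → T.Adj v r → q < v → ¬ v < r := by
    intro v q r hq hr hqv hvr
    obtain ⟨θ, α, hα, hwedge⟩ := hspan v
    have hqw := hwedge q hq
    have hrw := hwedge r hr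
    rw [hpts, hpts] at hqw hrw
    exact pt_notMem_wedge_of_lt_of_lt hα (Nat.cast_lt.2 hqv) (Nat.cast_lt.2 hvr) hqw hrw
  have hdarts : Fintype.card T.Dart = 2 * (m + 1) := by
    have := htree.card_edgeFinset
    rw [Fintype.card_fin] at this
    rw [SimpleGraph.dart_card_eq_twice_card_edges]
    omega
  have hwt := sum_darts_dist_eq_two_mul_wt T pts
  have hlen := card_darts_add_le_sum_abs_sub T htree.connected.preconnected hside
  simp only [hpts, dist_pt_pt] at hwt
  rw [hdarts] at hlen
  push_cast at hlen ⊢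
  linarith
end
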